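/- The limit of κ((π − ε)/4)/ε as ε → 0⁺ equals 1; equivalently, κ((π − ε)/4) = ε·(1 + o(1)) as ε → 0⁺. -/
import Mathlib


open Real Topology Filter

set_option maxHeartbeats 1000000

/-- `κ(α)`: the ratio of the volume of the zero-resistance body of revolution `B_α`
to the volume of its convex hull (a circular cylinder). -/
noncomputable def kappaRatio (α : ℝ) : ℝ :=
  2 * Real.tan α * (Real.tan (2 * α) + Real.tan α / 3) / (Real.tan (2 * α) + Real.tan α) ^ 2

lemma tan_div_self_tendsto : Tendsto (fun x : ℝ => Real.tan x / x) (𝓝[≠] (0:ℝ)) (𝓝 1) := by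
  have hd : HasDerivAt Real.tan 1 0 := by
    have h := Real.hasDerivAt_tan (x := 0) (by simp)
    simpa using h
  have := (hasDerivAt_iff_tendsto_slope).mp hd
  refine this.congr ?_
  intro y
  simp [slope_def_field, div_eq_iff]

/-- The limit of `κ((π − ε)/4)/ε` as `ε → 0⁺` equals `1`; that is,
`κ((π − ε)/4) = ε·(1 + o(1))` as `ε → 0⁺`. -/
theorem tendsto_kappaRatio_near_pi_div_four :
    Tendsto (fun ε : ℝ => kappaRatio ((π - ε) / 4) / ε) (𝓝[>] (0 : ℝ)) (𝓝 1) := by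
  -- factor 1 : tan(ε/2)/(ε/2) → 1
  have hmap : Tendsto (fun ε : ℝ => ε / 2) (𝓝[>] (0:ℝ)) (𝓝[≠] (0:ℝ)) := by
    apply tendsto_nhdsWithin_of_tendsto_nhds_of_eventually_within
    · have : Tendsto (fun ε : ℝ => ε / 2) (𝓝 (0:ℝ)) (𝓝 (0/2)) :=
        (tendsto_id.div_const 2)
      simpa using this.mono_left nhdsWithin_le_nhds
    · filter_upwards [self_mem_nhdsWithin] with ε hε
      exact ne_of_gt (half_pos hε)
  have h1 : Tendsto (fun ε : ℝ => Real.tan (ε/2) / (ε/2)) (𝓝[>] (0:ℝ)) (𝓝 1) :=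
    tan_div_self_tendsto.comp hmap
  -- factor 2
  set g : ℝ → ℝ := fun ε =>
    Real.tan ((π - ε)/4) * (1 + Real.tan ((π - ε)/4) * Real.tan (ε/2) / 3) /
      (1 + Real.tan ((π - ε)/4) * Real.tan (ε/2)) ^ 2 with hg
  have hct : ContinuousAt (fun ε : ℝ => Real.tan ((π - ε)/4)) 0 := by
    have h : ContinuousAt Real.tan ((π - 0)/4) := by
      rw [Real.continuousAt_tan, show ((π:ℝ) - 0)/4 = π/4 by ring, Real.cos_pi_div_four]
      positivity
    have h2 : ContinuousAt (fun ε : ℝ => (π - ε)/4) 0 := by fun_prop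
    simpa [Function.comp_def] using ContinuousAt.comp (x := (0:ℝ)) h h2
  have hcs : ContinuousAt (fun ε : ℝ => Real.tan (ε/2)) 0 := by
    have h : ContinuousAt Real.tan ((0:ℝ)/2) := by
      rw [Real.continuousAt_tan]; norm_num
    have h2 : ContinuousAt (fun ε : ℝ => ε/2) 0 := by fun_prop
    simpa [Function.comp_def] using ContinuousAt.comp (x := (0:ℝ)) h h2
  have h2 : Tendsto g (𝓝[>] (0:ℝ)) (𝓝 1) := by
    have hc : ContinuousAt g 0 := by
      apply ContinuousAt.div
      · exact hct.mul (continuousAt_const.add ((hct.mul hcs).div_const 3))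
      · exact (continuousAt_const.add (hct.mul hcs)).pow 2
      · simp
    have hval : g 0 = 1 := by
      simp [hg, Real.tan_pi_div_four]
    have := hc.tendsto.mono_left (nhdsWithin_le_nhds (s := Set.Ioi (0:ℝ)))
    rwa [hval] at this
  have hmain : Tendsto (fun ε => (Real.tan (ε/2) / (ε/2)) * g ε) (𝓝[>] (0:ℝ)) (𝓝 1) := by
    simpa using h1.mul h2
  refine hmain.congr' ?_
  filter_upwards [self_mem_nhdsWithin, Ioo_mem_nhdsGT_of_mem (by norm_num : (0:ℝ) ∈ Set.Ico 0 1)]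
    with ε hε hε1
  have hε0 : 0 < ε := hε
  have hεlt : ε < 1 := hε1.2
  have hπ : (1:ℝ) < π := by linarith [Real.pi_gt_three]
  have hs : 0 < Real.tan (ε/2) :=
    Real.tan_pos_of_pos_of_lt_pi_div_two (by positivity) (by linarith)
  have ht : 0 < Real.tan ((π - ε)/4) :=
    Real.tan_pos_of_pos_of_lt_pi_div_two (by linarith) (by linarith)
  have htan2 : Real.tan (2 * ((π - ε)/4)) = (Real.tan (ε/2))⁻¹ := by
    have : 2 * ((π - ε)/4) = π/2 - ε/2 := by ring
    rw [this, Real.tan_pi_div_two_sub]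
  set t := Real.tan ((π - ε)/4)
  set s := Real.tan (ε/2)
  have hst : (1 + t * s) ≠ 0 := by positivity
  simp only [kappaRatio, htan2, hg]
  rw [eq_comm]
  field_simp
  ring
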